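/- arXiv:math/0506542 — 2 statements merged into one kernel-verified Lean document; each statement's English description precedes it below -/
import Mathlib

section
/- For every commutative ring A, every family of weights R : ℤ → A, every m ≥ 1, all g_1, …, g_m ∈ A, every integer n ≥ 0 and every natural number j, the following inversion formula expressing V' in terms of the quantities Γ holds: V'_{n+2j−1,n−2} = Σ_{i=0}^{j} (−1)^{i−1} · Π_{n−1,n+2j−2}(i) · Γ_{2j−2i}(n) + δ_{j,0} · (R_{n−1} + δ_{n,0}). -/
open Finset

variable {A : Type*} [CommRing A]

/-- End height of a walk starting at a given height, with steps given by a list of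
Booleans (`true` = ascending step `+1`, `false` = descending step `-1`). -/
def walkEnd : ℤ → List Bool → ℤ
  | a, [] => a
  | a, true :: s => walkEnd (a + 1) s
  | a, false :: s => walkEnd (a - 1) s

/-- Weight of a walk: the product of `R h` over all descending steps `h → h - 1`. -/
def walkWeight (R : ℤ → A) : ℤ → List Bool → A
  | _, [] => 1
  | a, true :: s => walkWeight R (a + 1) s
  | a, false :: s => R a * walkWeight R (a - 1) s

/-- Whether every height visited by the walk (including the first and last) is `≥ c`. -/
def walkAbove (c : ℤ) : ℤ → List Bool → Bool
  | a, [] => decide (c ≤ a)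
  | a, true :: s => decide (c ≤ a) && walkAbove c (a + 1) s
  | a, false :: s => decide (c ≤ a) && walkAbove c (a - 1) s

/-- `Zw R a b k`: the generating function of walks of length `k` from height `a` to
height `b`, each walk weighted by `R h` per descending step from height `h`. -/
def Zw (R : ℤ → A) (a b : ℤ) (k : ℕ) : A :=
  ∑ s : Fin k → Bool,
    if walkEnd a (List.ofFn s) = b then walkWeight R a (List.ofFn s) else 0

/-- `Zwp R a b k`: the same generating function, restricted to walks staying at
heights `≥ a` ("positive walks"). -/
def Zwp (R : ℤ → A) (a b : ℤ) (k : ℕ) : A :=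
  ∑ s : Fin k → Bool,
    if walkEnd a (List.ofFn s) = b ∧ walkAbove a a (List.ofFn s) = true then
      walkWeight R a (List.ofFn s)
    else 0

/-- `Pdim R a b k`: hard-dimer partition function on the segment `[a,b]`: the sum over
`k`-element subsets `S` of `{a+1, …, b}` with no two consecutive elements of
`∏ i in S, R i` (a dimer on `[i-1,i]` carries weight `R i`). -/
noncomputable def Pdim (R : ℤ → A) (a b : ℤ) (k : ℕ) : A :=
  ∑ S ∈ Finset.powersetCard k (Finset.Icc (a + 1) b),
    if ∀ i ∈ S, i + 1 ∉ S then ∏ i ∈ S, R i else 0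

/-- `Vp R g m a b = Σ_{k=1}^{m} g_k • Zw R a b (2k-1)`: grand-canonical generating
function for walks of odd length from `a` to `b`. -/
def Vp (R : ℤ → A) (g : ℕ → A) (m : ℕ) (a b : ℤ) : A :=
  ∑ k ∈ Finset.Icc 1 m, g k * Zw R a b (2 * k - 1)

/-- The conserved quantities `Γ_{2i}(n)`; `Gam R g m i n` stands for `Γ_{2i}(n)`. -/
def Gam (R : ℤ → A) (g : ℕ → A) (m : ℕ) (i : ℕ) (n : ℤ) : A :=
  if i = 0 then R (n - 1) - Vp R g m (n - 1) (n - 2) + (if n = 0 then 1 else 0)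
  else
    Zwp R (n - 1) (n - 1) (2 * i) *
        (R (n - 1) - Vp R g m (n - 1) (n - 2) + (if n = 0 then 1 else 0)) -
      ∑ j ∈ Finset.Icc 1 i,
        Zwp R (n - 1) (n - 1 + 2 * (j : ℤ)) (2 * i) * Vp R g m (n + 2 * (j : ℤ) - 1) (n - 2)

/-- The symmetric conserved quantities `Γ̃_{2i}(n)`; `Gamt R g m i n` stands
for `Γ̃_{2i}(n)`. -/
def Gamt (R : ℤ → A) (g : ℕ → A) (m : ℕ) (i : ℕ) (n : ℤ) : A :=
  if i = 0 then R n - Vp R g m n (n - 1)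
  else
    (Zw R n (n - 1) (2 * i - 1) - R (n - 1) * R (n + 1) * Zw R (n - 2) (n + 1) (2 * i - 1)) *
        (R n - Vp R g m n (n - 1)) -
      ∑ j ∈ Finset.Icc 1 i,
        (Zw R (n - (j : ℤ)) (n + (j : ℤ) - 1) (2 * i - 1) -
            R (n - (j : ℤ) - 1) * R (n + (j : ℤ) + 1) *
              Zw R (n - (j : ℤ) - 2) (n + (j : ℤ) + 1) (2 * i - 1)) *
          Vp R g m (n + (j : ℤ)) (n - (j : ℤ) - 1)

/-- The master equation: `R i = 0` for `i < 0` and `R n = 1 + V'_{n,n-1}` for `n ≥ 0`. -/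
def MasterEq (R : ℤ → A) (g : ℕ → A) (m : ℕ) : Prop :=
  (∀ i : ℤ, i < 0 → R i = 0) ∧ ∀ n : ℤ, 0 ≤ n → R n = 1 + Vp R g m n (n - 1)

/-- `Zodd R a b i = Zw R a b (2i-1)`, with the convention that for `i = 0`
(walks of length `-1`) it equals `1` if `b = a - 1` and `0` otherwise. -/
def Zodd (R : ℤ → A) (a b : ℤ) (i : ℕ) : A :=
  if i = 0 then (if b = a - 1 then 1 else 0) else Zw R a b (2 * i - 1)

/-- Binomial coefficient with an integer lower index, with the convention that it
vanishes for negative lower index. -/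
def Cz (n : ℕ) (p : ℤ) : ℤ := if 0 ≤ p then n.choose p.toNat else 0

/-!
The polynomials `p_t(x) = ∑ᵢ (-1)^i Π_{a,a+t-1}(i) x^(t-2i)` obey the three-term recurrence
`p_{t+2} = x p_{t+1} - R_{a+t+1} p_t` (split off the last site of the dimer segment), while the
operator `T` extending walks that stay `≥ a` by one step acts on point masses by
`T δ_{a+s} = δ_{a+s+1} + R_{a+s} δ_{a+s-1}` for `s ≥ 1`. Hence `p_t(T) δ_a = δ_{a+t}`, that is
`∑ᵢ (-1)^i Π_{a,a+t-1}(i) Z⁺_{a,b}(t-2i) = δ_{b,a+t}`. For `a = n - 1` and `t = 2j` this inverts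
the triangular system `Γ_{2i}(n) = Z⁺_{a,a}(2i) Γ_0(n) - ∑_{l ≤ j} Z⁺_{a,a+2l}(2i) V'_{n+2l-1,n-2}`.
-/

def ZwAbove (R : ℤ → A) (c : ℤ) : ℤ → ℤ → ℕ → A
  | a, b, 0 => if a = b ∧ c ≤ a then 1 else 0
  | a, b, k + 1 => if c ≤ a then ZwAbove R c (a + 1) b k + R a * ZwAbove R c (a - 1) b k else 0

theorem sum_walks_eq_ZwAbove (R : ℤ → A) (c : ℤ) (k : ℕ) (a b : ℤ) :
    (∑ s : Fin k → Bool,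
      if walkEnd a (List.ofFn s) = b ∧ walkAbove c a (List.ofFn s) = true then
        walkWeight R a (List.ofFn s) else 0) = ZwAbove R c a b k := by
  induction k generalizing a with
  | zero => simp [ZwAbove, walkEnd, walkAbove, walkWeight]
  | succ k ih =>
    rw [← (Fin.consEquiv fun _ => Bool).sum_comp, Fintype.sum_prod_type, Fintype.sum_bool]
    simp only [Fin.consEquiv_apply, List.ofFn_succ, Fin.cons_succ, Fin.cons_zero,
      walkEnd, walkAbove, walkWeight, ZwAbove]
    by_cases hca : c ≤ a
    · simp only [hca, decide_true, Bool.true_and, if_true, ← ih, mul_sum, mul_ite, mul_zero]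
    · simp [hca]

theorem Zwp_eq_ZwAbove (R : ℤ → A) (a b : ℤ) (k : ℕ) : Zwp R a b k = ZwAbove R a a b k :=
  sum_walks_eq_ZwAbove R a k a b

theorem ZwAbove_succ_right (R : ℤ → A) (c : ℤ) (k : ℕ) (a b : ℤ) :
    ZwAbove R c a b (k + 1) =
      if c ≤ b then ZwAbove R c a (b - 1) k + R (b + 1) * ZwAbove R c a (b + 1) k else 0 := by
  induction k generalizing a with
  | zero =>
    simp only [ZwAbove]
    split_ifs <;> simp only [zero_add, add_zero, mul_one, mul_zero] <;>
      first | rfl | (exfalso; omega) | (congr 1; omega)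
  | succ k ih =>
    rw [ZwAbove, ih, ih, ZwAbove, ZwAbove]
    split_ifs <;> ring

theorem Zwp_zero (R : ℤ → A) (a b : ℤ) : Zwp R a b 0 = if b = a then 1 else 0 := by
  simp [Zwp_eq_ZwAbove, ZwAbove, eq_comm]

theorem Zwp_succ (R : ℤ → A) (a b : ℤ) (k : ℕ) :
    Zwp R a b (k + 1) =
      if a ≤ b then Zwp R a (b - 1) k + R (b + 1) * Zwp R a (b + 1) k else 0 := by
  simp only [Zwp_eq_ZwAbove, ZwAbove_succ_right]

theorem Zwp_eq_zero_of_lt (R : ℤ → A) (a b : ℤ) (k : ℕ) (h : a + k < b) : Zwp R a b k = 0 := by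
  induction k generalizing b with
  | zero => rw [Zwp_zero, if_neg (by omega)]
  | succ k ih =>
    rw [Zwp_succ, ih _ (by omega), ih _ (by omega)]
    simp

theorem Pdim_zero (R : ℤ → A) (a b : ℤ) : Pdim R a b 0 = 1 := by
  simp [Pdim]

theorem Pdim_eq_zero_of_toNat_lt (R : ℤ → A) (a b : ℤ) (i : ℕ)
    (hi : (b + 1 - a).toNat < 2 * i) : Pdim R a b i = 0 := by
  refine sum_eq_zero fun S hS => if_neg fun hsparse => ?_
  rw [mem_powersetCard] at hS
  -- `S` and its shift `S + 1` are disjoint subsets of `[a + 1, b + 1]`.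
  have hdisj : Disjoint S (S.image (· + 1)) := by
    simp only [disjoint_right, mem_image]
    rintro _ ⟨y, hy, rfl⟩
    exact hsparse y hy
  have hsub : S ∪ S.image (· + 1) ⊆ Icc (a + 1) (b + 1) := by
    intro x hx
    simp only [mem_union, mem_image] at hx
    rcases hx with hx | ⟨y, hy, rfl⟩
    · have := hS.1 hx; simp only [mem_Icc] at *; omega
    · have := hS.1 hy; simp only [mem_Icc] at *; omega
  have hcard := card_le_card hsub
  rw [card_union_of_disjoint hdisj, card_image_of_injective _ (add_left_injective 1),
    Int.card_Icc, hS.2] at hcard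
  omega

theorem sparse_insert_iff {b : ℤ} {T : Finset ℤ} (hT : ∀ y ∈ T, y ≤ b) :
    (∀ y ∈ insert (b + 1) T, y + 1 ∉ insert (b + 1) T) ↔ (∀ y ∈ T, y + 1 ∉ T) ∧ b ∉ T := by
  have hb : b + 1 ∉ T := fun h => by have := hT _ h; omega
  simp only [mem_insert, forall_eq_or_imp]
  constructor
  · rintro ⟨-, h⟩
    exact ⟨fun y hy hy1 => (h y hy) (Or.inr hy1), fun hbT => h b hbT (Or.inl rfl)⟩
  · rintro ⟨h, hbT⟩
    refine ⟨?_, fun y hy => ?_⟩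
    · rintro (h1 | h1)
      · omega
      · have := hT _ h1; omega
    · rintro (h1 | h1)
      · exact hbT (by rwa [show y = b by omega] at hy)
      · exact h y hy h1

theorem Pdim_succ_succ (R : ℤ → A) {a b : ℤ} (hab : a ≤ b) (i : ℕ) :
    Pdim R a (b + 1) (i + 1) = Pdim R a b (i + 1) + R (b + 1) * Pdim R a (b - 1) i := by
  have hb : b + 1 ∉ Icc (a + 1) b := by simp
  have hdisj : Disjoint (powersetCard (i + 1) (Icc (a + 1) b))
      ((powersetCard i (Icc (a + 1) b)).image (insert (b + 1))) := by
    simp only [disjoint_left, mem_image, mem_powersetCard]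
    rintro _ ⟨hS, -⟩ ⟨T, -, rfl⟩
    exact hb (hS (mem_insert_self _ _))
  have hinj : Set.InjOn (insert (b + 1)) (powersetCard i (Icc (a + 1) b)) :=
    insert_erase_invOn.2.injOn.mono fun T hT => notMem_mono (mem_powersetCard.1 hT).1 hb
  rw [Pdim, ← insert_Icc_right_eq_Icc_add_one (by omega), powersetCard_succ_insert hb,
    sum_union hdisj, sum_image hinj]
  congr 1
  -- Sets containing `b` contribute nothing, since `b + 1` is already present.
  rw [Pdim, mul_sum,
    ← sum_subset (powersetCard_mono (Icc_subset_Icc_right (show b - 1 ≤ b by omega)))]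
  · refine sum_congr rfl fun T hT => ?_
    rw [mem_powersetCard] at hT
    have hTb : ∀ y ∈ T, y ≤ b - 1 := fun y hy => (mem_Icc.1 (hT.1 hy)).2
    have hbT : b ∉ T := fun h => by have := hTb b h; omega
    rw [if_congr (sparse_insert_iff fun y hy => (hTb y hy).trans (by omega))
      (prod_insert fun h => by have := hTb _ h; omega) rfl, mul_ite, mul_zero]
    simp [hbT]
  · intro T hT hT'
    simp only [mem_powersetCard] at hT hT'
    refine if_neg fun hsparse => hT' ⟨fun y hy => ?_, hT.2⟩
    have hbT := ((sparse_insert_iff fun y hy => (mem_Icc.1 (hT.1 hy)).2).1 hsparse).2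
    have hy' := mem_Icc.1 (hT.1 hy)
    have hyb : y ≠ b := fun h => hbT (h ▸ hy)
    exact mem_Icc.2 ⟨hy'.1, by omega⟩

noncomputable def dimerCoeff (R : ℤ → A) (a : ℤ) (t i : ℕ) : A :=
  (-1) ^ i * Pdim R a (a + t - 1) i

theorem dimerCoeff_zero (R : ℤ → A) (a : ℤ) (t : ℕ) : dimerCoeff R a t 0 = 1 := by
  simp [dimerCoeff, Pdim_zero]

theorem dimerCoeff_eq_zero (R : ℤ → A) (a : ℤ) {t i : ℕ} (h : t < 2 * i) :
    dimerCoeff R a t i = 0 := by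
  rw [dimerCoeff, Pdim_eq_zero_of_toNat_lt R _ _ i (by omega), mul_zero]

theorem dimerCoeff_succ_succ (R : ℤ → A) (a : ℤ) (t i : ℕ) :
    dimerCoeff R a (t + 2) (i + 1) =
      dimerCoeff R a (t + 1) (i + 1) - R (a + t + 1) * dimerCoeff R a t i := by
  have h := Pdim_succ_succ R (show a ≤ a + t by omega) i
  simp only [dimerCoeff, Nat.cast_add, Nat.cast_ofNat, Nat.cast_one]
  rw [show a + (t + 2) - 1 = a + t + 1 by ring, show a + (t + 1) - 1 = a + t by ring, h]
  ring

-- Shift `i ↦ i + 1` in `dimerCoeff_succ_succ`; the boundary terms `i = 0`, `i = N + 1` vanish.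
theorem smul_sum_dimerCoeff_smul {M : Type*} [AddCommGroup M] [Module A M] (R : ℤ → A) (a : ℤ)
    {N t : ℕ} (ht : t + 2 ≤ 2 * N) (f : ℕ → M) :
    R (a + t + 1) • ∑ i ∈ range (N + 1), dimerCoeff R a t i • f (t - 2 * i) =
      ∑ i ∈ range (N + 1),
        (dimerCoeff R a (t + 1) i - dimerCoeff R a (t + 2) i) • f (t + 2 - 2 * i) := by
  have h := sum_range_succ'
    (fun i => (dimerCoeff R a (t + 1) i - dimerCoeff R a (t + 2) i) • f (t + 2 - 2 * i)) (N + 1)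
  rw [sum_range_succ, dimerCoeff_eq_zero R a (show t + 1 < 2 * (N + 1) by omega),
    dimerCoeff_eq_zero R a (show t + 2 < 2 * (N + 1) by omega), dimerCoeff_zero,
    dimerCoeff_zero, sub_self, zero_smul, add_zero, sub_self, zero_smul, add_zero] at h
  rw [h, smul_sum]
  refine sum_congr rfl fun i _ => ?_
  rw [smul_smul, dimerCoeff_succ_succ, show t + 2 - 2 * (i + 1) = t - 2 * i by omega]
  congr 1
  ring

def posStep (R : ℤ → A) (a : ℤ) : (ℤ → A) →ₗ[A] ℤ → A where
  toFun f b := if a ≤ b then f (b - 1) + R (b + 1) * f (b + 1) else 0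
  map_add' f g := by
    funext b
    simp only [Pi.add_apply]
    split_ifs <;> ring
  map_smul' c f := by
    funext b
    simp only [Pi.smul_apply, smul_eq_mul, RingHom.id_apply]
    split_ifs <;> ring

theorem Zwp_succ_eq_posStep (R : ℤ → A) (a : ℤ) (k : ℕ) :
    (Zwp R a · (k + 1)) = posStep R a (Zwp R a · k) :=
  funext fun b => Zwp_succ R a b k

theorem Zwp_zero_eq_single (R : ℤ → A) (a : ℤ) : (Zwp R a · 0) = Pi.single a 1 :=
  funext fun b => by rw [Zwp_zero, Pi.single_apply]

theorem posStep_single (R : ℤ → A) {a c : ℤ} (hc : a ≤ c) :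
    posStep R a (Pi.single c 1) =
      Pi.single (c + 1) 1 + if a < c then R c • Pi.single (c - 1) 1 else 0 := by
  funext b
  simp only [posStep, LinearMap.coe_mk, AddHom.coe_mk, Pi.add_apply, Pi.single_apply]
  split_ifs <;>
    simp only [Pi.smul_apply, Pi.single_apply, Pi.zero_apply, smul_eq_mul, mul_one, mul_zero,
      add_zero, zero_add] <;>
    (try split_ifs) <;> (try simp only [mul_one, mul_zero, add_zero]) <;>
    first | rfl | (exfalso; omega) | congr 1

theorem sum_dimerCoeff_smul_Zwp (R : ℤ → A) (a : ℤ) (N : ℕ) : ∀ t : ℕ, t ≤ 2 * N →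
    ∑ i ∈ range (N + 1), dimerCoeff R a t i • (Zwp R a · (t - 2 * i)) =
      Pi.single (a + t) 1
  | 0, _ => by
    rw [sum_eq_single 0 (fun i _ hi => by rw [dimerCoeff_eq_zero R a (by omega), zero_smul])
      (by simp)]
    simp [dimerCoeff_zero, Zwp_zero_eq_single]
  | 1, _ => by
    rw [sum_eq_single 0 (fun i _ hi => by rw [dimerCoeff_eq_zero R a (by omega), zero_smul])
      (by simp)]
    simp [dimerCoeff_zero, Zwp_succ_eq_posStep, Zwp_zero_eq_single, posStep_single]
  | t + 2, ht => by
    have ih₁ := sum_dimerCoeff_smul_Zwp R a N (t + 1) (by omega)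
    have ih₀ := sum_dimerCoeff_smul_Zwp R a N t (by omega)
    have hstep : ∀ i, dimerCoeff R a (t + 1) i • posStep R a (Zwp R a · (t + 1 - 2 * i)) =
        dimerCoeff R a (t + 1) i • (Zwp R a · (t + 2 - 2 * i)) := fun i => by
      rcases le_or_gt (2 * i) (t + 1) with h | h
      · rw [show t + 2 - 2 * i = t + 1 - 2 * i + 1 by omega, Zwp_succ_eq_posStep]
      · rw [dimerCoeff_eq_zero R a h, zero_smul, zero_smul]
    calc ∑ i ∈ range (N + 1), dimerCoeff R a (t + 2) i • (Zwp R a · (t + 2 - 2 * i))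
        = ∑ i ∈ range (N + 1), dimerCoeff R a (t + 1) i • (Zwp R a · (t + 2 - 2 * i)) -
            R (a + t + 1) • ∑ i ∈ range (N + 1), dimerCoeff R a t i • (Zwp R a · (t - 2 * i)) := by
          rw [smul_sum_dimerCoeff_smul R a ht fun k => (Zwp R a · k), ← sum_sub_distrib]
          exact sum_congr rfl fun i _ => by rw [sub_smul, sub_sub_cancel]
      _ = posStep R a (Pi.single (a + (t + 1 : ℕ)) 1) - R (a + t + 1) • Pi.single (a + t) 1 := by
          rw [← ih₁, ← ih₀, map_sum]
          simp only [map_smul, hstep]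
      _ = Pi.single (a + (t + 2 : ℕ)) 1 := by
          rw [posStep_single R (by omega), if_pos (by omega)]
          push_cast
          simp only [← add_assoc, add_sub_cancel_right]
          congr 1
          ring

theorem sum_dimerCoeff_mul_Zwp (R : ℤ → A) (a : ℤ) (j : ℕ) (b : ℤ) :
    ∑ i ∈ range (j + 1), dimerCoeff R a (2 * j) i * Zwp R a b (2 * (j - i)) =
      if b = a + 2 * j then 1 else 0 := by
  have h := congrFun (sum_dimerCoeff_smul_Zwp R a j (2 * j) le_rfl) b
  simpa only [Finset.sum_apply, Pi.smul_apply, smul_eq_mul, Pi.single_apply, Nat.cast_mul,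
    Nat.cast_ofNat, ← Nat.mul_sub] using h

theorem Gam_eq_sum (R : ℤ → A) (g : ℕ → A) (m : ℕ) {i j : ℕ} (hij : i ≤ j) (n : ℤ) :
    Gam R g m i n = Zwp R (n - 1) (n - 1) (2 * i) * Gam R g m 0 n -
      ∑ l ∈ Icc 1 j,
        Zwp R (n - 1) (n - 1 + 2 * (l : ℤ)) (2 * i) * Vp R g m (n + 2 * l - 1) (n - 2) := by
  rw [← sum_subset (Icc_subset_Icc_right hij) fun l hl hl' => by
    rw [Zwp_eq_zero_of_lt R _ _ _ (by simp only [mem_Icc] at hl hl'; push_cast; omega), zero_mul]]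
  rcases eq_or_ne i 0 with rfl | hi
  · simp [Zwp_zero]
  · rw [Gam, if_neg hi, Gam, if_pos rfl]

theorem stmt_7_general {A : Type*} [CommRing A] (R : ℤ → A) (m : ℕ) (g : ℕ → A)
    (n : ℤ) (j : ℕ) :
    Vp R g m (n + 2 * (j : ℤ) - 1) (n - 2) =
      ∑ i ∈ Finset.range (j + 1),
          (-1 : A) ^ (i + 1) * Pdim R (n - 1) (n + 2 * (j : ℤ) - 2) i * Gam R g m (j - i) n +
        (if j = 0 then R (n - 1) + (if n = 0 then 1 else 0) else 0) := by
  rcases eq_or_ne j 0 with rfl | hj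
  · rw [zero_add, sum_range_one, Nat.sub_zero, Gam, if_pos rfl, if_pos rfl, Pdim_zero]
    simp only [Nat.cast_zero, mul_zero, add_zero]
    ring
  have hcoeff : ∀ i, (-1 : A) ^ (i + 1) * Pdim R (n - 1) (n + 2 * (j : ℤ) - 2) i =
      -dimerCoeff R (n - 1) (2 * j) i := fun i => by
    rw [dimerCoeff, pow_succ, show n - 1 + ((2 * j : ℕ) : ℤ) - 1 = n + 2 * j - 2 by push_cast; ring]
    ring
  have hinv := sum_dimerCoeff_mul_Zwp R (n - 1) j
  simp only [hcoeff, if_neg hj, add_zero]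
  symm
  calc ∑ i ∈ range (j + 1), -dimerCoeff R (n - 1) (2 * j) i * Gam R g m (j - i) n
      = ∑ l ∈ Icc 1 j, (if n - 1 + 2 * (l : ℤ) = n - 1 + 2 * j then 1 else 0) *
            Vp R g m (n + 2 * l - 1) (n - 2) -
          (if n - 1 = n - 1 + 2 * (j : ℤ) then 1 else 0) * Gam R g m 0 n := by
        rw [sum_congr rfl fun i _ => by rw [Gam_eq_sum R g m (Nat.sub_le j i) n]]
        simp only [← hinv, sum_mul, mul_sub, mul_sum, sum_sub_distrib, neg_mul, sum_neg_distrib]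
        rw [sum_comm]
        simp only [mul_assoc]
        ring
    _ = Vp R g m (n + 2 * (j : ℤ) - 1) (n - 2) := by
        have hl : ∀ l : ℕ, n - 1 + 2 * (l : ℤ) = n - 1 + 2 * j ↔ l = j := fun l => by omega
        simp only [hl, boole_mul, sum_ite_eq', mem_Icc,
          if_neg (show n - 1 ≠ n - 1 + 2 * (j : ℤ) by omega)]
        simp [Nat.one_le_iff_ne_zero.2 hj]

/-- inversion formula expressing `V'` in terms of the `Γ`'s. -/
theorem stmt_7 {A : Type*} [CommRing A] (R : ℤ → A) (m : ℕ) (hm : 1 ≤ m) (g : ℕ → A)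
    (n : ℤ) (hn : 0 ≤ n) (j : ℕ) :
    Vp R g m (n + 2 * (j : ℤ) - 1) (n - 2) =
      ∑ i ∈ Finset.range (j + 1),
          (-1 : A) ^ (i + 1) * Pdim R (n - 1) (n + 2 * (j : ℤ) - 2) i * Gam R g m (j - i) n +
        (if j = 0 then R (n - 1) + (if n = 0 then 1 else 0) else 0) :=
  stmt_7_general R m g n j
end

section
/- Conservation of the quantities Γ: let A be a commutative ring, R : ℤ → A, m ≥ 1 and g_1, …, g_m ∈ A. If R satisfies the master equation, then for every natural number j ≥ 1 the quantity Γ_{2j}(n) is independent of n, i.e. Γ_{2j}(n+1) = Γ_{2j}(n) for all integers n ≥ 0. -/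
open Finset

variable {A : Type*} [CommRing A]

/-!
Count steps with a formal variable `X`. Let `λ_c` be the series of loops from `c` staying `≥ c`,
and `Ψ_c = Σ_k X^k Σ_h Z⁺_{c,h}(k) ψ_c(h)` with `ψ_c(c) = 1` and `ψ_c(h) = -V'_{h,c-1}` otherwise;
under the master equation `Γ_{2i}(c+1)` is the coefficient of `X^{2i}` in `Ψ_c`. Cutting positive
walks at their last visit to the floor gives `λ_c = 1 + X² R_{c+1} λ_c λ_{c+1}`, and moving the
junction between a positive walk and the odd walks of `V'` by one step relates `Ψ_q` to `Ψ_{q+1}`.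
Together they give, for `q ≥ 0`,
  `Ψ_{q-1} - Ψ_q = (λ_{q-1} - 1) (Ψ_q - Ψ_{q+1})`.
As `X ∣ λ_{q-1} - 1`, each difference `Ψ_{q-1} - Ψ_q` is divisible by every power of `X`, so it
vanishes.
-/

theorem walkEnd_append (a : ℤ) (s t : List Bool) :
    walkEnd a (s ++ t) = walkEnd (walkEnd a s) t := by
  induction s generalizing a with
  | nil => rfl
  | cons x s ih => cases x <;> exact ih _

theorem walkWeight_append (R : ℤ → A) (a : ℤ) (s t : List Bool) :
    walkWeight R a (s ++ t) = walkWeight R a s * walkWeight R (walkEnd a s) t := by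
  induction s generalizing a with
  | nil => simp [walkWeight, walkEnd]
  | cons x s ih => cases x <;> simp [walkWeight, walkEnd, ih, mul_assoc]

theorem walkAbove_concat (c a : ℤ) (s : List Bool) (x : Bool) :
    walkAbove c a (s ++ [x]) = (walkAbove c a s && decide (c ≤ walkEnd a (s ++ [x]))) := by
  induction s generalizing a with
  | nil => cases x <;> simp [walkAbove, walkEnd]
  | cons y s ih => cases y <;> simp [walkAbove, walkEnd, ih, Bool.and_assoc]

theorem le_walkEnd_of_walkAbove {c a : ℤ} {s : List Bool} (h : walkAbove c a s = true) :
    c ≤ walkEnd a s := by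
  induction s generalizing a with
  | nil => simpa [walkAbove, walkEnd] using h
  | cons x s ih => cases x <;> simp only [walkAbove, Bool.and_eq_true] at h <;> exact ih h.2

theorem walkEnd_le_add_length (a : ℤ) (s : List Bool) : walkEnd a s ≤ a + s.length := by
  induction s generalizing a with
  | nil => simp [walkEnd]
  | cons x s ih => cases x <;> simp only [walkEnd, List.length_cons] <;> grind

theorem even_walkEnd_sub_add_length (a : ℤ) (s : List Bool) :
    Even (walkEnd a s - a + s.length) := by
  induction s generalizing a with
  | nil => simp [walkEnd]
  | cons x s ih =>
    cases x
    · obtain ⟨r, hr⟩ := ih (a - 1)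
      exact ⟨r, by simp only [walkEnd, List.length_cons]; push_cast; omega⟩
    · obtain ⟨r, hr⟩ := ih (a + 1)
      exact ⟨r + 1, by simp only [walkEnd, List.length_cons]; push_cast; omega⟩

theorem sum_ofFn_succ_cons {M : Type*} [AddCommMonoid M] (k : ℕ) (F : List Bool → M) :
    ∑ s : Fin (k + 1) → Bool, F (List.ofFn s)
      = ∑ s : Fin k → Bool, (F (true :: List.ofFn s) + F (false :: List.ofFn s)) := by
  rw [← (Fin.consEquiv fun _ => Bool).sum_comp, Fintype.sum_prod_type, Fintype.sum_bool,
    ← Finset.sum_add_distrib]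
  simp [Fin.consEquiv]

theorem sum_ofFn_succ_concat {M : Type*} [AddCommMonoid M] (k : ℕ) (F : List Bool → M) :
    ∑ s : Fin (k + 1) → Bool, F (List.ofFn s)
      = ∑ s : Fin k → Bool, (F (List.ofFn s ++ [true]) + F (List.ofFn s ++ [false])) := by
  rw [← (Fin.snocEquiv fun _ => Bool).sum_comp, Fintype.sum_prod_type, Fintype.sum_bool,
    ← Finset.sum_add_distrib]
  simp only [Fin.snocEquiv, Equiv.coe_fn_mk, List.ofFn_succ', Fin.snoc_castSucc, Fin.snoc_last,
    List.concat_eq_append]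

theorem Zw_zero (R : ℤ → A) (a b : ℤ) : Zw R a b 0 = if a = b then 1 else 0 := by
  simp [Zw, walkEnd, walkWeight]

theorem Zw_succ_left (R : ℤ → A) (a b : ℤ) (k : ℕ) :
    Zw R a b (k + 1) = Zw R (a + 1) b k + R a * Zw R (a - 1) b k := by
  rw [Zw, sum_ofFn_succ_cons k fun l => if walkEnd a l = b then walkWeight R a l else 0, Finset.sum_add_distrib, Zw, Zw, Finset.mul_sum]
  simp only [walkEnd, walkWeight, mul_ite, mul_zero]
  rfl

theorem Zw_succ_right (R : ℤ → A) (a b : ℤ) (k : ℕ) :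
    Zw R a b (k + 1) = R (b + 1) * Zw R a (b + 1) k + Zw R a (b - 1) k := by
  rw [Zw, sum_ofFn_succ_concat k fun l => if walkEnd a l = b then walkWeight R a l else 0, Finset.sum_add_distrib, Zw, Zw, Finset.mul_sum, add_comm]
  congr 1 <;> refine Finset.sum_congr rfl fun s _ => ?_ <;>
    simp only [walkEnd_append, walkWeight_append, walkEnd, walkWeight, mul_one, mul_ite,
      mul_zero] <;>
    generalize walkEnd a (List.ofFn s) = e
  · by_cases he : e = b + 1
    · rw [if_pos (by omega), if_pos he, he, mul_comm]
    · rw [if_neg (by omega), if_neg he]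
  · exact if_congr (by omega) rfl rfl

theorem Zw_eq_zero_of_not_even (R : ℤ → A) {a b : ℤ} {k : ℕ} (h : ¬ Even (b - a + k)) :
    Zw R a b k = 0 := by
  refine Finset.sum_eq_zero fun s _ => if_neg fun hb => h ?_
  simpa [hb] using even_walkEnd_sub_add_length a (List.ofFn s)

theorem Zw_eq_zero_of_le_neg_two (R : ℤ → A) (hR : ∀ i : ℤ, i < 0 → R i = 0) (k : ℕ)
    {a b : ℤ} (hb : b ≤ -2) (hab : b < a) : Zw R a b k = 0 := by
  induction k generalizing b with
  | zero => rw [Zw_zero, if_neg hab.ne']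
  | succ k ih => rw [Zw_succ_right, hR _ (by omega), zero_mul, zero_add, ih (by omega) (by omega)]

/-- `Σ_h Z⁺_{c,h}(k) f(h)`, as a sum over the positive walks themselves. -/
def posWalkSum (R : ℤ → A) (c : ℤ) (k : ℕ) (f : ℤ → A) : A :=
  ∑ s : Fin k → Bool,
    (if walkAbove c c (List.ofFn s) then walkWeight R c (List.ofFn s) else 0) *
      f (walkEnd c (List.ofFn s))

def walkTransfer (R : ℤ → A) (c : ℤ) (f : ℤ → A) (h : ℤ) : A :=
  f (h + 1) + if c < h then R h * f (h - 1) else 0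

section posWalkSum

variable (R : ℤ → A) (c : ℤ) (k : ℕ)

theorem posWalkSum_zero (f : ℤ → A) : posWalkSum R c 0 f = f c := by
  simp [posWalkSum, walkAbove, walkWeight, walkEnd]

theorem posWalkSum_succ (f : ℤ → A) :
    posWalkSum R c (k + 1) f = posWalkSum R c k (walkTransfer R c f) := by
  rw [posWalkSum, sum_ofFn_succ_concat k fun l =>
    (if walkAbove c c l then walkWeight R c l else 0) * f (walkEnd c l)]
  refine Finset.sum_congr rfl fun s _ => ?_
  simp only [walkAbove_concat, walkEnd_append, walkWeight_append, walkEnd, walkWeight,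
    walkTransfer]
  cases habove : walkAbove c c (List.ofFn s)
  · simp
  · have hc := le_walkEnd_of_walkAbove habove
    generalize walkEnd c (List.ofFn s) = e at hc ⊢
    by_cases hce : c < e
    · simp only [hce, show c ≤ e + 1 by omega, show c ≤ e - 1 by omega, decide_true,
        Bool.and_self, if_true, mul_one]
      ring
    · simp [hce, show c ≤ e + 1 by omega, show ¬c ≤ e - 1 by omega]

theorem posWalkSum_add (f f' : ℤ → A) :
    posWalkSum R c k (fun h => f h + f' h) = posWalkSum R c k f + posWalkSum R c k f' := by
  simp only [posWalkSum, mul_add, Finset.sum_add_distrib]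

theorem posWalkSum_sub (f f' : ℤ → A) :
    posWalkSum R c k (fun h => f h - f' h) = posWalkSum R c k f - posWalkSum R c k f' := by
  simp only [posWalkSum, mul_sub, Finset.sum_sub_distrib]

theorem posWalkSum_const_mul (a : A) (f : ℤ → A) :
    posWalkSum R c k (fun h => a * f h) = a * posWalkSum R c k f := by
  simp only [posWalkSum, Finset.mul_sum]
  exact Finset.sum_congr rfl fun _ _ => by ring

theorem posWalkSum_congr {f f' : ℤ → A} (h : ∀ x, c ≤ x → f x = f' x) :
    posWalkSum R c k f = posWalkSum R c k f' := by
  refine Finset.sum_congr rfl fun s _ => ?_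
  cases habove : walkAbove c c (List.ofFn s)
  · simp
  · rw [h _ (le_walkEnd_of_walkAbove habove)]

theorem sum_Zwp_mul_eq_posWalkSum (T : Finset ℤ) (f : ℤ → A)
    (hT : ∀ s : Fin k → Bool, walkAbove c c (List.ofFn s) → walkEnd c (List.ofFn s) ∈ T) :
    ∑ h ∈ T, Zwp R c h k * f h = posWalkSum R c k f := by
  simp only [Zwp, Finset.sum_mul, ite_mul, zero_mul]
  rw [Finset.sum_comm]
  refine Finset.sum_congr rfl fun s _ => ?_
  cases habove : walkAbove c c (List.ofFn s)
  · simp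
  · simp [Finset.sum_ite_eq', hT s habove, eq_comm]

end posWalkSum

open PowerSeries

def walkSeries (R : ℤ → A) (c : ℤ) (f : ℤ → A) : A⟦X⟧ :=
  PowerSeries.mk fun k => posWalkSum R c k f

def loopSeries (R : ℤ → A) (c : ℤ) : A⟦X⟧ :=
  walkSeries R c fun h => if h = c then 1 else 0

section walkSeries

variable (R : ℤ → A) (c : ℤ)

theorem walkSeries_eq_C_add_X_mul (f : ℤ → A) :
    walkSeries R c f = C (f c) + X * walkSeries R c (walkTransfer R c f) := by
  ext (_ | k)
  · simp [walkSeries, posWalkSum_zero]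
  · simp [walkSeries, posWalkSum_succ, coeff_succ_X_mul]

theorem walkSeries_add (f f' : ℤ → A) :
    walkSeries R c (fun h => f h + f' h) = walkSeries R c f + walkSeries R c f' := by
  ext k
  simp [walkSeries, posWalkSum_add]

theorem walkSeries_sub (f f' : ℤ → A) :
    walkSeries R c (fun h => f h - f' h) = walkSeries R c f - walkSeries R c f' := by
  ext k
  simp [walkSeries, posWalkSum_sub]

theorem walkSeries_const_mul (a : A) (f : ℤ → A) :
    walkSeries R c (fun h => a * f h) = C a * walkSeries R c f := by
  ext k
  simp [walkSeries, posWalkSum_const_mul, coeff_C_mul]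

theorem walkSeries_congr {f f' : ℤ → A} (h : ∀ x, c ≤ x → f x = f' x) :
    walkSeries R c f = walkSeries R c f' := by
  ext k
  simp [walkSeries, posWalkSum_congr R c k h]

/-- Last-visit decomposition: a positive walk from `c` ending strictly above `c` splits at its
last visit to `c` into a loop above `c` and an up-step followed by a positive walk from
`c + 1`. -/
theorem walkSeries_eq_X_mul_loopSeries_mul (f : ℤ → A) (hf : f c = 0) :
    walkSeries R c f = X * loopSeries R c * walkSeries R (c + 1) f := by
  ext k
  induction k generalizing f with
  | zero => simp [walkSeries, posWalkSum_zero, hf, mul_assoc]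
  | succ k ih =>
    set g : ℤ → A := fun h => if h = c then 0 else walkTransfer R c f h
    have htransfer : walkSeries R c (walkTransfer R c f)
        = walkSeries R c g + C (f (c + 1)) * loopSeries R c := by
      rw [loopSeries, ← walkSeries_const_mul, ← walkSeries_add]
      refine walkSeries_congr R c fun x _ => ?_
      by_cases hx : x = c <;> simp [g, hx, walkTransfer]
    have hf' : walkSeries R (c + 1) f = C (f (c + 1)) + X * walkSeries R (c + 1) g := by
      rw [walkSeries_eq_C_add_X_mul]
      congr 2
      refine walkSeries_congr R (c + 1) fun x hx => ?_
      have hxc : x ≠ c := by omega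
      by_cases hcx : c + 1 < x
      · simp [g, hxc, walkTransfer, hcx, show c < x by omega]
      · simp [g, walkTransfer, show x = c + 1 by omega, hf]
    calc coeff (k + 1) (walkSeries R c f)
        = coeff k (walkSeries R c g + C (f (c + 1)) * loopSeries R c) := by
          rw [← htransfer]; simp [walkSeries, posWalkSum_succ]
      _ = coeff k (X * loopSeries R c * walkSeries R (c + 1) g
            + C (f (c + 1)) * loopSeries R c) := by
          rw [map_add, map_add, ih g (by simp [g])]
      _ = coeff (k + 1) (X * loopSeries R c * walkSeries R (c + 1) f) := by
          rw [hf', ← coeff_succ_X_mul]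
          ring_nf

theorem loopSeries_eq :
    loopSeries R c = 1 + X ^ 2 * C (R (c + 1)) * loopSeries R c * loopSeries R (c + 1) := by
  have htransfer : walkSeries R c (walkTransfer R c fun h => if h = c then 1 else 0)
      = C (R (c + 1)) * walkSeries R c (fun h => if h = c + 1 then 1 else 0) := by
    rw [← walkSeries_const_mul]
    refine walkSeries_congr R c fun x hx => ?_
    rcases hx.lt_or_eq with hcx | rfl
    · by_cases hx1 : x = c + 1
      · simp [walkTransfer, hx1, show c + 1 + 1 ≠ c by omega]
      · simp [walkTransfer, hcx, hx1, show x - 1 ≠ c by omega, show x + 1 ≠ c by omega]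
    · simp [walkTransfer]
  conv_lhs => rw [loopSeries, walkSeries_eq_C_add_X_mul, htransfer,
    walkSeries_eq_X_mul_loopSeries_mul R c _ (by simp)]
  simp only [loopSeries, if_pos, map_one]
  ring

end walkSeries

section Vp

variable (R : ℤ → A) (g : ℕ → A) (m : ℕ)

theorem Vp_self (a : ℤ) : Vp R g m a a = 0 := by
  refine Finset.sum_eq_zero fun k hk => ?_
  rw [Zw_eq_zero_of_not_even R, mul_zero]
  rintro ⟨r, hr⟩
  simp only [Finset.mem_Icc] at hk
  omega

theorem walkTransfer_Zw {S : ℕ} (hS : Odd S) {c x : ℤ} (hx : c ≤ x) :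
    walkTransfer R c (fun y => Zw R y (c - 1) S) x = R c * Zw R x c S + Zw R x (c - 2) S := by
  have hl := Zw_succ_left R x (c - 1) S
  have hr := Zw_succ_right R x (c - 1) S
  rw [sub_add_cancel, sub_sub, one_add_one_eq_two] at hr
  rcases hx.lt_or_eq with hcx | rfl
  · simp only [walkTransfer, if_pos hcx]
    linear_combination hr - hl
  · -- an odd walk is never a loop, so the step down to `c - 1` contributes nothing
    have hloop : Zw R (c - 1) (c - 1) S = 0 :=
      Zw_eq_zero_of_not_even R (by simpa [Int.even_coe_nat] using Nat.not_even_iff_odd.2 hS)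
    simp only [walkTransfer, lt_irrefl, if_false, add_zero]
    linear_combination hr - hl - R c * hloop

theorem walkTransfer_Vp {c x : ℤ} (hx : c ≤ x) :
    walkTransfer R c (fun y => Vp R g m y (c - 1)) x = R c * Vp R g m x c + Vp R g m x (c - 2) := by
  have hsum : walkTransfer R c (fun y => Vp R g m y (c - 1)) x
      = ∑ k ∈ Finset.Icc 1 m, g k * walkTransfer R c (fun y => Zw R y (c - 1) (2 * k - 1)) x := by
    simp only [walkTransfer, Vp]
    split_ifs
    · simp only [mul_add, Finset.sum_add_distrib, Finset.mul_sum]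
      congr 1
      exact Finset.sum_congr rfl fun _ _ => by ring
    · simp only [add_zero]
  rw [hsum, Vp, Vp, Finset.mul_sum, ← Finset.sum_add_distrib]
  refine Finset.sum_congr rfl fun k hk => ?_
  rw [walkTransfer_Zw R (Nat.odd_iff.2 (by simp only [Finset.mem_Icc] at hk; omega)) hx]
  ring

end Vp

def vpSeries (R : ℤ → A) (g : ℕ → A) (m : ℕ) (c b : ℤ) : A⟦X⟧ :=
  walkSeries R c fun h => Vp R g m h b

def gamSeries (R : ℤ → A) (g : ℕ → A) (m : ℕ) (c : ℤ) : A⟦X⟧ :=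
  walkSeries R c fun h => if h = c then 1 else -Vp R g m h (c - 1)

section gamSeries

variable (R : ℤ → A) (g : ℕ → A) (m : ℕ)

theorem vpSeries_sub_one (q : ℤ) :
    vpSeries R g m q (q - 1)
      = C (Vp R g m q (q - 1)) + X * (C (R q) * vpSeries R g m q q + vpSeries R g m q (q - 2)) := by
  rw [vpSeries, walkSeries_eq_C_add_X_mul, walkSeries_congr R q fun x hx => walkTransfer_Vp R g m hx,
    walkSeries_add, walkSeries_const_mul]
  rfl

theorem vpSeries_self (q : ℤ) :
    vpSeries R g m q q = X * loopSeries R q * vpSeries R g m (q + 1) q :=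
  walkSeries_eq_X_mul_loopSeries_mul R q _ (Vp_self R g m q)

theorem gamSeries_sub_one (q : ℤ) :
    gamSeries R g m (q - 1)
      = loopSeries R (q - 1) * (1 - X * vpSeries R g m q (q - 2)) := by
  have hsplit : gamSeries R g m (q - 1) = loopSeries R (q - 1)
      - walkSeries R (q - 1) (fun h => if h = q - 1 then 0 else Vp R g m h (q - 2)) := by
    rw [gamSeries, loopSeries, ← walkSeries_sub]
    congr 1
    funext h
    split_ifs <;> simp [sub_sub, one_add_one_eq_two]
  rw [hsplit, walkSeries_eq_X_mul_loopSeries_mul R (q - 1) _ (by simp), sub_add_cancel,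
    walkSeries_congr R q (f' := fun h => Vp R g m h (q - 2)) fun x hx => if_neg (by omega)]
  rw [vpSeries]
  ring

theorem gamSeries_of_nonneg (hmaster : MasterEq R g m) {q : ℤ} (hq : 0 ≤ q) :
    gamSeries R g m q = C (R q) * loopSeries R q - vpSeries R g m q (q - 1) := by
  rw [loopSeries, ← walkSeries_const_mul, vpSeries, ← walkSeries_sub, gamSeries]
  congr 1
  funext h
  split_ifs with hh
  · rw [hh, hmaster.2 q hq]
    ring
  · ring

theorem gamSeries_eq_one_add (hmaster : MasterEq R g m) {q : ℤ} (hq : 0 ≤ q) :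
    gamSeries R g m q = 1 + X ^ 2 * C (R q) * loopSeries R q * gamSeries R g m (q + 1)
      - X * vpSeries R g m q (q - 2) := by
  have hV : C (Vp R g m q (q - 1)) = C (R q) - 1 := by
    rw [hmaster.2 q hq]
    simp
  have hnext := gamSeries_of_nonneg R g m hmaster (by omega : 0 ≤ q + 1)
  rw [add_sub_cancel_right] at hnext
  rw [gamSeries_of_nonneg R g m hmaster hq, vpSeries_sub_one, vpSeries_self, hV, hnext]
  linear_combination C (R q) * loopSeries_eq R q

end gamSeries

theorem PowerSeries.eq_zero_of_forall_eq_mul_succ {R : Type*} [CommRing R]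
    (Δ a : ℕ → R⟦X⟧) (ha : ∀ k, X ∣ a k) (h : ∀ k, Δ k = a k * Δ (k + 1)) (k : ℕ) :
    Δ k = 0 := by
  have hdvd : ∀ n k, X ^ n ∣ Δ k := by
    intro n
    induction n with
    | zero => simp
    | succ n ih =>
      intro k
      rw [h k, pow_succ']
      exact mul_dvd_mul (ha k) (ih (k + 1))
  ext n
  simpa using X_pow_dvd_iff.1 (hdvd (n + 1) k) n n.lt_succ_self

section conservation

variable (R : ℤ → A) (g : ℕ → A) (m : ℕ)

theorem gamSeries_sub_one_sub (hmaster : MasterEq R g m) {q : ℤ} (hq : 0 ≤ q) :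
    gamSeries R g m (q - 1) - gamSeries R g m q
      = (loopSeries R (q - 1) - 1) * (gamSeries R g m q - gamSeries R g m (q + 1)) := by
  have hloop := loopSeries_eq R (q - 1)
  rw [sub_add_cancel] at hloop
  rw [gamSeries_sub_one, gamSeries_eq_one_add R g m hmaster hq]
  linear_combination gamSeries R g m (q + 1) * hloop

theorem gamSeries_sub_one_eq (hmaster : MasterEq R g m) {q : ℤ} (hq : 0 ≤ q) :
    gamSeries R g m (q - 1) = gamSeries R g m q := by
  lift q to ℕ using hq
  refine sub_eq_zero.1 (PowerSeries.eq_zero_of_forall_eq_mul_succ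
    (fun k => gamSeries R g m (k - 1) - gamSeries R g m k) (fun k => loopSeries R (k - 1) - 1)
    (fun k => ⟨X * C (R (k - 1 + 1)) * loopSeries R (k - 1) * loopSeries R (k - 1 + 1),
      by linear_combination loopSeries_eq R ((k : ℤ) - 1)⟩) (fun k => ?_) q)
  simpa using gamSeries_sub_one_sub R g m hmaster (Nat.cast_nonneg k)

end conservation

section Gam

variable {R : ℤ → A} {g : ℕ → A} {m : ℕ}

theorem MasterEq.Gam_zero_eq_one (hmaster : MasterEq R g m) {n : ℤ} (hn : 0 ≤ n) :
    Gam R g m 0 n = 1 := by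
  rw [Gam, if_pos rfl]
  rcases hn.lt_or_eq with hn | rfl
  · rw [hmaster.2 (n - 1) (by omega), if_neg hn.ne', sub_sub, one_add_one_eq_two]
    ring
  · have hVp : Vp R g m (0 - 1) (0 - 2) = 0 := Finset.sum_eq_zero fun k _ => by
      rw [Zw_eq_zero_of_le_neg_two R hmaster.1 _ (by norm_num) (by norm_num), mul_zero]
    rw [hmaster.1 _ (by norm_num), hVp]
    simp

theorem Gam_eq_coeff_gamSeries (hmaster : MasterEq R g m) {c : ℤ} (hc : -1 ≤ c) (i : ℕ) :
    Gam R g m i (c + 1) = coeff (2 * i) (gamSeries R g m c) := by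
  have hΓ₀ := hmaster.Gam_zero_eq_one (n := c + 1) (by omega)
  rcases i.eq_zero_or_pos with rfl | hi
  · simp [hΓ₀, gamSeries, walkSeries, posWalkSum_zero]
  rw [Gam, if_pos rfl] at hΓ₀
  have hT : ∀ s : Fin (2 * i) → Bool, walkAbove c c (List.ofFn s) →
      walkEnd c (List.ofFn s) ∈ insert c ((Finset.Icc 1 i).image fun j : ℕ => c + 2 * j) := by
    intro s habove
    have hlow := le_walkEnd_of_walkAbove habove
    have hup := walkEnd_le_add_length c (List.ofFn s)
    obtain ⟨r, hr⟩ := even_walkEnd_sub_add_length c (List.ofFn s)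
    simp only [List.length_ofFn] at hup hr
    simp only [Finset.mem_insert, Finset.mem_image, Finset.mem_Icc]
    by_cases he : walkEnd c (List.ofFn s) = c
    · exact Or.inl he
    · exact Or.inr ⟨(r - i).toNat, by omega, by omega⟩
  have hc_notMem : c ∉ (Finset.Icc 1 i).image fun j : ℕ => c + 2 * j := by
    simp only [Finset.mem_image, Finset.mem_Icc, not_exists, not_and]
    omega
  rw [Gam, if_neg hi.ne', hΓ₀, gamSeries, walkSeries, coeff_mk,
    ← sum_Zwp_mul_eq_posWalkSum R c _ _ _ hT, Finset.sum_insert hc_notMem,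
    Finset.sum_image fun _ _ _ _ h => by simpa using h]
  simp only [add_sub_cancel_right, if_pos, mul_one]
  rw [sub_eq_add_neg, ← Finset.sum_neg_distrib]
  congr 1
  refine Finset.sum_congr rfl fun j hj => ?_
  simp only [Finset.mem_Icc] at hj
  rw [if_neg (by omega), mul_neg, show c + 1 + 2 * (j : ℤ) - 1 = c + 2 * j by ring,
    show c + 1 - 2 = c - 1 by ring]

end Gam

theorem stmt_9_general {A : Type*} [CommRing A] (R : ℤ → A) (m : ℕ) (g : ℕ → A)
    (hmaster : MasterEq R g m) (j : ℕ) (n : ℤ) (hn : 0 ≤ n) :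
    Gam R g m j (n + 1) = Gam R g m j n := by
  have hprev := Gam_eq_coeff_gamSeries hmaster (c := n - 1) (by omega) j
  rw [sub_add_cancel] at hprev
  rw [Gam_eq_coeff_gamSeries hmaster (by omega), hprev, gamSeries_sub_one_eq R g m hmaster hn]

/-- conservation of the quantities `Γ_{2j}` under the master equation. -/
theorem stmt_9 {A : Type*} [CommRing A] (R : ℤ → A) (m : ℕ) (hm : 1 ≤ m) (g : ℕ → A)
    (hmaster : MasterEq R g m) (j : ℕ) (hj : 1 ≤ j) (n : ℤ) (hn : 0 ≤ n) :
    Gam R g m j (n + 1) = Gam R g m j n :=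
  stmt_9_general R m g hmaster j n hn
end
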